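/- Let A = (a_1,…,a_K) and B = (b_1,…,b_K) be two lists of K distinct items from E such that a_i = b_j only if i = j, and let (w(e))_{e∈E} be mutually independent Bernoulli random variables with means w̄(e) ∈ [0,1]. Assume w̄(a_k) ≤ w̄(b_k) for all k, and let w̄_max = max_{e∈E} w̄(e) and α = (1 − w̄_max)^{K−1}. Then, writing Δ_k = w̄(b_k) − w̄(a_k) and P_k = P(w(a_1) = ⋯ = w(a_{k−1}) = 0), we have α · Σ_{k=1}^K Δ_k P_k ≤ E[∏_{k=1}^K (1 − w(a_k)) − ∏_{k=1}^K (1 − w(b_k))] ≤ Σ_{k=1}^K Δ_k P_k. -/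

import Mathlib

/-!
By independence, the expectation of `∏ (1 - w (c k))` over distinct items `c k`
is `∏ (1 - w̄ (c k))`; in particular `P_k = ∏_{i<k} (1 - w̄ (a i))`. Telescoping the difference of
the two products of means, one factor `1 - w̄ (a i)` being swapped for `1 - w̄ (b i)` at a time,
gives `E[∏ (1 - w (a k)) - ∏ (1 - w (b k))] = ∑ Δ_k P_k Q_k` with
`Q_k = ∏_{i>k} (1 - w̄ (b i))`, and `α ≤ Q_k ≤ 1` because `Q_k` has at most `K - 1` factors,
each in `[1 - w̄_max, 1]`.
-/

open MeasureTheory ProbabilityTheory Finset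

namespace Fin

theorem prod_Iio_succ {M : Type*} [CommMonoid M] {n : ℕ} (f : Fin (n + 1) → M) (j : Fin n) :
    ∏ i ∈ Iio j.succ, f i = f 0 * ∏ i ∈ Iio j, f i.succ := by
  have : Iio j.succ = insert 0 ((Iio j).map (succEmb n)) := by
    ext i; cases i using Fin.cases <;> simp
  rw [this, prod_insert (by simp), prod_map]
  rfl

theorem prod_sub_prod_eq_sum {R : Type*} [CommRing R] {n : ℕ} (f g : Fin n → R) :
    ∏ i, f i - ∏ i, g i = ∑ k, (∏ i ∈ Iio k, f i) * (f k - g k) * ∏ i ∈ Ioi k, g i := by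
  induction n with
  | zero => simp
  | succ n ih =>
    rw [prod_univ_succ, prod_univ_succ, sum_univ_succ, prod_Ioi_zero]
    simp only [prod_Iio_succ, prod_Ioi_succ, mul_assoc (f 0), ← mul_sum,
      ← ih fun i => f i.succ]
    rw [show Iio (0 : Fin (n + 1)) = ∅ from Iio_bot, prod_empty]
    ring

theorem pow_le_prod_Ioi {n : ℕ} {c : ℝ} (hc₀ : 0 ≤ c) (hc₁ : c ≤ 1) (x : Fin n → ℝ)
    (hx : ∀ i, c ≤ x i) (k : Fin n) : c ^ (n - 1) ≤ ∏ i ∈ Ioi k, x i :=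
  calc c ^ (n - 1)
      ≤ c ^ #(Ioi k) := pow_le_pow_of_le_one hc₀ hc₁ (by rw [card_Ioi]; omega)
    _ = ∏ _i ∈ Ioi k, c := (Finset.prod_const c).symm
    _ ≤ ∏ i ∈ Ioi k, x i := prod_le_prod (fun _ _ => hc₀) fun i _ => hx i

end Fin

theorem ProbabilityTheory.iIndepFun.integral_finsetProd {ι Ω : Type*} [MeasurableSpace Ω]
    {μ : Measure Ω} {X : ι → Ω → ℝ} (hX : iIndepFun X μ)
    (mX : ∀ i, AEStronglyMeasurable (X i) μ) (s : Finset ι) :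
    ∫ ω, ∏ i ∈ s, X i ω ∂μ = ∏ i ∈ s, ∫ ω, X i ω ∂μ := by
  simp only [← prod_coe_sort s]
  exact (hX.precomp Subtype.val_injective).integral_fun_prod_eq_prod_integral fun i => mX i

theorem prod_one_sub_eq_indicator {ι α : Type*} {X : ι → α → ℝ}
    (hX : ∀ i x, X i x = 0 ∨ X i x = 1) (s : Finset ι) :
    (fun x => ∏ i ∈ s, (1 - X i x)) = {x | ∀ i ∈ s, X i x = 0}.indicator 1 := by
  ext x
  rw [Set.indicator_apply]
  split_ifs with hx
  · exact prod_eq_one fun i hi => by simp [hx i hi]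
  · obtain ⟨i, hi, hne⟩ : ∃ i ∈ s, X i x ≠ 0 := by simpa using hx
    exact prod_eq_zero hi (by simp [(hX i x).resolve_left hne])

section ZeroOne

variable {ι Ω : Type*} [MeasurableSpace Ω] {μ : Measure Ω} {X : ι → Ω → ℝ}

theorem measurableSet_forall_eq_zero (hmeas : ∀ i, Measurable (X i)) (s : Finset ι) :
    MeasurableSet {ω | ∀ i ∈ s, X i ω = 0} := by
  rw [show {ω | ∀ i ∈ s, X i ω = 0} = ⋂ i ∈ s, X i ⁻¹' {0} by ext; simp]
  exact s.measurableSet_biInter fun i _ => hmeas i (measurableSet_singleton 0)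

theorem integrable_prod_one_sub [IsFiniteMeasure μ] (hmeas : ∀ i, Measurable (X i))
    (hX : ∀ i ω, X i ω = 0 ∨ X i ω = 1) (s : Finset ι) :
    Integrable (fun ω => ∏ i ∈ s, (1 - X i ω)) μ := by
  rw [prod_one_sub_eq_indicator hX]
  exact (integrable_const 1).indicator (measurableSet_forall_eq_zero hmeas s)

theorem integral_prod_one_sub [IsProbabilityMeasure μ] (hindep : iIndepFun X μ)
    (hmeas : ∀ i, Measurable (X i)) (hX : ∀ i ω, X i ω = 0 ∨ X i ω = 1) (s : Finset ι) :
    ∫ ω, ∏ i ∈ s, (1 - X i ω) ∂μ = ∏ i ∈ s, (1 - ∫ ω, X i ω ∂μ) := by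
  have hindep' : iIndepFun (fun i ω => 1 - X i ω) μ :=
    hindep.comp (fun _ x => 1 - x) fun _ => measurable_const.sub measurable_id
  rw [hindep'.integral_finsetProd (fun i => (measurable_const.sub (hmeas i)).aestronglyMeasurable)]
  refine prod_congr rfl fun i _ => ?_
  have hXi : Integrable (X i) μ :=
    .of_mem_Icc 0 1 (hmeas i).aemeasurable <| .of_forall fun ω => by
      rcases hX i ω with h | h <;> simp [h]
  rw [integral_sub (integrable_const 1) hXi, integral_const, probReal_univ, one_smul]

theorem measureReal_forall_eq_zero [IsProbabilityMeasure μ] (hindep : iIndepFun X μ)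
    (hmeas : ∀ i, Measurable (X i)) (hX : ∀ i ω, X i ω = 0 ∨ X i ω = 1) (s : Finset ι) :
    μ.real {ω | ∀ i ∈ s, X i ω = 0} = ∏ i ∈ s, (1 - ∫ ω, X i ω ∂μ) := by
  rw [← integral_indicator_one (measurableSet_forall_eq_zero hmeas s),
    ← prod_one_sub_eq_indicator hX, integral_prod_one_sub hindep hmeas hX]

end ZeroOne

theorem regret_decomposition_two_sided_bound_general {E : Type*}
    {Ω : Type*} [MeasurableSpace Ω] (μ : Measure Ω) [IsProbabilityMeasure μ]
    (K : ℕ) (a b : Fin K → E)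
    (ha : Function.Injective a) (hb : Function.Injective b)
    (w : E → Ω → ℝ) (wbar : E → ℝ)
    (hmeas : ∀ e, Measurable (w e))
    (hbin : ∀ e ω, w e ω = 0 ∨ w e ω = 1)
    (hmean : ∀ e, (∫ ω, w e ω ∂μ) = wbar e)
    (hw01 : ∀ e, wbar e ∈ Set.Icc (0 : ℝ) 1)
    (hle : ∀ k : Fin K, wbar (a k) ≤ wbar (b k))
    (hindep : iIndepFun (m := fun _ : E => Real.measurableSpace) w μ)
    (wmax : ℝ) (hwmax : IsGreatest (Set.range wbar) wmax) :
    (1 - wmax) ^ (K - 1) *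
        (∑ k : Fin K, (wbar (b k) - wbar (a k)) *
          (μ {ω | ∀ i : Fin K, i < k → w (a i) ω = 0}).toReal) ≤
      (∫ ω, ((∏ k : Fin K, (1 - w (a k) ω)) - ∏ k : Fin K, (1 - w (b k) ω)) ∂μ) ∧
    (∫ ω, ((∏ k : Fin K, (1 - w (a k) ω)) - ∏ k : Fin K, (1 - w (b k) ω)) ∂μ) ≤
      ∑ k : Fin K, (wbar (b k) - wbar (a k)) *
        (μ {ω | ∀ i : Fin K, i < k → w (a i) ω = 0}).toReal := by
  have hbin' (c : Fin K → E) : ∀ k ω, w (c k) ω = 0 ∨ w (c k) ω = 1 := fun k => hbin (c k)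
  have hmeas' (c : Fin K → E) : ∀ k, Measurable (w (c k)) := fun k => hmeas (c k)
  have hprob (k : Fin K) : (μ {ω | ∀ i : Fin K, i < k → w (a i) ω = 0}).toReal =
      ∏ i ∈ Iio k, (1 - wbar (a i)) := by
    rw [← measureReal_def]
    simpa [hmean] using
      measureReal_forall_eq_zero (hindep.precomp ha) (hmeas' a) (hbin' a) (Iio k)
  have hexpect : ∫ ω, ((∏ k : Fin K, (1 - w (a k) ω)) - ∏ k : Fin K, (1 - w (b k) ω)) ∂μ =
      ∑ k : Fin K, (wbar (b k) - wbar (a k)) *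
        (μ {ω | ∀ i : Fin K, i < k → w (a i) ω = 0}).toReal *
          ∏ i ∈ Ioi k, (1 - wbar (b i)) := by
    rw [integral_sub (integrable_prod_one_sub (hmeas' a) (hbin' a) univ)
        (integrable_prod_one_sub (hmeas' b) (hbin' b) univ),
      integral_prod_one_sub (hindep.precomp ha) (hmeas' a) (hbin' a),
      integral_prod_one_sub (hindep.precomp hb) (hmeas' b) (hbin' b)]
    simp only [hmean, hprob, Fin.prod_sub_prod_eq_sum]
    exact sum_congr rfl fun k _ => by ring
  obtain ⟨e, rfl⟩ := hwmax.1
  have hQ (k : Fin K) : (1 - wbar e) ^ (K - 1) ≤ ∏ i ∈ Ioi k, (1 - wbar (b i)) ∧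
      ∏ i ∈ Ioi k, (1 - wbar (b i)) ≤ 1 := by
    refine ⟨Fin.pow_le_prod_Ioi (by linarith [(hw01 e).2]) (by linarith [(hw01 e).1]) _
      (fun i => by linarith [hwmax.2 ⟨b i, rfl⟩]) k, ?_⟩
    exact prod_le_one (fun i _ => by linarith [(hw01 (b i)).2])
      fun i _ => by linarith [(hw01 (b i)).1]
  have hΔP (k : Fin K) : 0 ≤ (wbar (b k) - wbar (a k)) *
      (μ {ω | ∀ i : Fin K, i < k → w (a i) ω = 0}).toReal :=
    mul_nonneg (sub_nonneg.2 (hle k)) ENNReal.toReal_nonneg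
  rw [hexpect]
  refine ⟨?_, sum_le_sum fun k _ => mul_le_of_le_one_right (hΔP k) (hQ k).2⟩
  rw [mul_sum]
  exact sum_le_sum fun k _ => by
    rw [mul_comm]; exact mul_le_mul_of_nonneg_left (hQ k).1 (hΔP k)

/-- under the assumptions of Statement 5 together with `w̄(a_k) ≤ w̄(b_k)`
for all `k`, with `w̄_max = max_{e ∈ E} w̄(e)`, `α = (1 − w̄_max)^{K−1}`,
`Δ_k = w̄(b_k) − w̄(a_k)` and `P_k = P(w(a_1) = ⋯ = w(a_{k−1}) = 0)`, it holds that
`α · Σ_k Δ_k P_k ≤ E[∏_k (1 − w(a_k)) − ∏_k (1 − w(b_k))] ≤ Σ_k Δ_k P_k`. -/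
theorem regret_decomposition_two_sided_bound {E : Type*} [Fintype E] [Nonempty E]
    {Ω : Type*} [MeasurableSpace Ω] (μ : Measure Ω) [IsProbabilityMeasure μ]
    (K : ℕ) (a b : Fin K → E)
    (ha : Function.Injective a) (hb : Function.Injective b)
    (hab : ∀ i j : Fin K, a i = b j → i = j)
    (w : E → Ω → ℝ) (wbar : E → ℝ)
    (hmeas : ∀ e, Measurable (w e))
    (hbin : ∀ e ω, w e ω = 0 ∨ w e ω = 1)
    (hmean : ∀ e, (∫ ω, w e ω ∂μ) = wbar e)
    (hw01 : ∀ e, wbar e ∈ Set.Icc (0 : ℝ) 1)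
    (hle : ∀ k : Fin K, wbar (a k) ≤ wbar (b k))
    (hindep : iIndepFun (m := fun _ : E => Real.measurableSpace) w μ)
    (wmax : ℝ) (hwmax : IsGreatest (Set.range wbar) wmax) :
    (1 - wmax) ^ (K - 1) *
        (∑ k : Fin K, (wbar (b k) - wbar (a k)) *
          (μ {ω | ∀ i : Fin K, i < k → w (a i) ω = 0}).toReal) ≤
      (∫ ω, ((∏ k : Fin K, (1 - w (a k) ω)) - ∏ k : Fin K, (1 - w (b k) ω)) ∂μ) ∧
    (∫ ω, ((∏ k : Fin K, (1 - w (a k) ω)) - ∏ k : Fin K, (1 - w (b k) ω)) ∂μ) ≤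
      ∑ k : Fin K, (wbar (b k) - wbar (a k)) *
        (μ {ω | ∀ i : Fin K, i < k → w (a i) ω = 0}).toReal :=
  regret_decomposition_two_sided_bound_general μ K a b ha hb w wbar hmeas hbin hmean hw01 hle hindep
    wmax hwmax
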